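/- Let n ≥ 2, let λ, ν ∈ ℂ with ν − λ a nonnegative integer, and let 1 ≤ p ≤ n−1. Then x_p·𝒦_{λ,ν} = −2 ∂_p 𝒦_{λ+1,ν−1} as tempered distributions on ℝ^n. -/

import Mathlib

/-- Partial derivative ∂_p of a complex-valued function on ℝ^n. -/
noncomputable def pd {n : ℕ} (p : Fin n) (f : (Fin n → ℝ) → ℂ) : (Fin n → ℝ) → ℂ :=
  fun x => fderiv ℝ f x (Pi.single p 1)

/-- Δ' = ∂_1² + ⋯ + ∂_{n−1}², the Laplacian in the first n−1 variables on ℝ^n. -/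
noncomputable def lapP {n : ℕ} (f : (Fin n → ℝ) → ℂ) : (Fin n → ℝ) → ℂ :=
  fun x => ∑ j ∈ Finset.univ.filter (fun j : Fin n => (j : ℕ) < n - 1), pd j (pd j f) x

/-- ∂_n, the partial derivative in the last variable on ℝ^n. -/
noncomputable def pdLast {n : ℕ} (f : (Fin n → ℝ) → ℂ) : (Fin n → ℝ) → ℂ :=
  if h : 0 < n then pd ⟨n - 1, by omega⟩ f else 0

/-- The coefficient of z^{l−2k} in the renormalized Gegenbauer polynomial
C̃_l^α(z) = Σ_{k=0}^{⌊l/2⌋} (−1)^k (∏_{m=⌊(l+1)/2⌋}^{l−k−1}(α+m)) (2z)^{l−2k}/(k!(l−2k)!). -/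
noncomputable def gegenCoeff (α : ℂ) (l k : ℕ) : ℂ :=
  (-1 : ℂ) ^ k * (∏ m ∈ Finset.Ico ((l + 1) / 2) (l - k), (α + (m : ℂ))) *
    2 ^ (l - 2 * k) / ((Nat.factorial k : ℂ) * (Nat.factorial (l - 2 * k) : ℂ))

/-- The action on a test function `φ` of the tempered distribution
`𝒦_{λ,ν} = Σ_{k=0}^{⌊l/2⌋} a_k (−1)^k (Δ')^k ∂_n^{l−2k} δ` on ℝ^n, where `l = ν − λ`
and `a_k` are the coefficients of `C̃_l^{λ−(n−1)/2}`; each `∂` contributes a sign `−1`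
and δ evaluates at 0.  By convention `𝒦_{λ,ν} = 0` when `l < 0`. -/
noncomputable def Kact (n : ℕ) (lam : ℂ) (l : ℤ) (φ : (Fin n → ℝ) → ℂ) : ℂ :=
  if 0 ≤ l then
    ∑ k ∈ Finset.range (l.toNat / 2 + 1),
      gegenCoeff (lam - ((n : ℂ) - 1) / 2) l.toNat k *
        ((-1 : ℂ) ^ k * ((-1 : ℂ) ^ (l.toNat - 2 * k) *
          (pdLast (n := n))^[l.toNat - 2 * k] ((lapP (n := n))^[k] φ) 0))
  else 0

/-- γ(μ, a) := 1 if a is odd, μ + a/2 if a is even. -/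
noncomputable def gam (mu : ℂ) (a : ℕ) : ℂ := if a % 2 = 1 then 1 else mu + ((a / 2 : ℕ) : ℂ)

/-!
For `p < n - 1` we have `[∂_j, x_p] = δ_{jp}`, hence `Δ'^k x_p = x_p Δ'^k + 2k ∂_p Δ'^{k-1}`, while
`∂_n` commutes with `x_p`. Evaluating at the origin kills every term that still carries `x_p`, so
in `𝒦_{λ,ν}(x_p φ)` the `k`-th term becomes `2k` times the corresponding term with `Δ'^{k-1} ∂_p φ`.
After the shift `k ↦ k + 1` these match the terms of `𝒦_{λ+1,ν-1}(∂_p φ)` through the identity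
`a_k(α + 1, l) = -(k + 1) a_{k+1}(α, l + 2)` between the coefficients of `C̃_l^{α+1}` and
`C̃_{l+2}^α`.
-/

open scoped ContDiff

section CoordinateMultiplication

variable {n : ℕ} {f g h : (Fin n → ℝ) → ℂ}

theorem contDiff_pd (hf : ContDiff ℝ ∞ f) (p : Fin n) : ContDiff ℝ ∞ (pd p f) :=
  (hf.fderiv_right le_rfl).clm_apply contDiff_const

theorem pd_add (p : Fin n) (hf : Differentiable ℝ f) (hg : Differentiable ℝ g) :
    pd p (fun y => f y + g y) = fun y => pd p f y + pd p g y := by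
  funext x
  simp [pd, fderiv_fun_add (hf x) (hg x)]

theorem pd_const_mul (p : Fin n) (c : ℂ) (hf : Differentiable ℝ f) :
    pd p (fun y => c * f y) = fun y => c * pd p f y := by
  funext x
  simp [pd, fderiv_const_mul (hf x) c]

theorem pd_sum {ι : Type*} (s : Finset ι) {F : ι → (Fin n → ℝ) → ℂ} (p : Fin n)
    (hF : ∀ j ∈ s, Differentiable ℝ (F j)) :
    pd p (fun y => ∑ j ∈ s, F j y) = fun y => ∑ j ∈ s, pd p (F j) y := by
  funext x
  simp [pd, fderiv_fun_sum (fun j hj => hF j hj x)]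

theorem pd_coord_mul (p j : Fin n) (hf : Differentiable ℝ f) :
    pd j (fun y => (y p : ℂ) * f y)
      = fun y => (y p : ℂ) * pd j f y + if j = p then f y else 0 := by
  funext x
  have hcoord : HasFDerivAt (fun y : Fin n → ℝ => (y p : ℂ))
      (Complex.ofRealCLM.comp (ContinuousLinearMap.proj p)) x :=
    Complex.ofRealCLM.hasFDerivAt.comp x (hasFDerivAt_apply p x)
  rw [pd, (hcoord.fun_mul (hf x).hasFDerivAt).fderiv]
  by_cases h : j = p <;> simp [h, pd]

theorem contDiff_coord_mul (hf : ContDiff ℝ ∞ f) (p : Fin n) :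
    ContDiff ℝ ∞ (fun y => (y p : ℂ) * f y) :=
  (Complex.ofRealCLM.contDiff.comp (contDiff_apply ℝ ℝ p)).mul hf

theorem pd_comm (hf : ContDiff ℝ ∞ f) (i j : Fin n) : pd i (pd j f) = pd j (pd i f) := by
  funext x
  have hf' : Differentiable ℝ (fderiv ℝ f) :=
    (hf.fderiv_right (m := ∞) le_rfl).differentiable (by simp)
  have hsecond (v w : Fin n) :
      pd v (pd w f) x = fderiv ℝ (fderiv ℝ f) x (Pi.single v 1) (Pi.single w 1) := by
    change fderiv ℝ (fun y => fderiv ℝ f y (Pi.single w 1)) x (Pi.single v 1) = _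
    rw [fderiv_clm_apply (hf' x) (differentiableAt_const _)]
    simp
  rw [hsecond, hsecond, (hf.contDiffAt.isSymmSndFDerivAt (by simp; norm_cast)).eq]

theorem contDiff_lapP (hf : ContDiff ℝ ∞ f) : ContDiff ℝ ∞ (lapP f) :=
  ContDiff.sum fun j _ => contDiff_pd (contDiff_pd hf j) j

theorem contDiff_iterate_lapP (hf : ContDiff ℝ ∞ f) (k : ℕ) : ContDiff ℝ ∞ (lapP^[k] f) :=
  Function.Iterate.rec _ hf (fun _ => contDiff_lapP) k

theorem pd_lapP (hf : ContDiff ℝ ∞ f) (q : Fin n) : pd q (lapP f) = lapP (pd q f) := by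
  unfold lapP
  rw [pd_sum _ _ fun j _ => (contDiff_pd (contDiff_pd hf j) j).differentiable (by simp)]
  simp only [pd_comm (contDiff_pd hf _) q, pd_comm hf q]

theorem pd_iterate_lapP (hf : ContDiff ℝ ∞ f) (q : Fin n) (k : ℕ) :
    pd q (lapP^[k] f) = lapP^[k] (pd q f) := by
  induction k with
  | zero => rfl
  | succ k ih =>
    rw [Function.iterate_succ_apply', Function.iterate_succ_apply',
      pd_lapP (contDiff_iterate_lapP hf k), ih]

theorem lapP_add_const_mul (hf : ContDiff ℝ ∞ f) (hg : ContDiff ℝ ∞ g) (c : ℂ) :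
    lapP (fun y => f y + c * g y) = fun y => lapP f y + c * lapP g y := by
  have hdiff {u : (Fin n → ℝ) → ℂ} (hu : ContDiff ℝ ∞ u) : Differentiable ℝ u :=
    hu.differentiable (by simp)
  funext x
  simp only [lapP, Finset.mul_sum, ← Finset.sum_add_distrib]
  refine Finset.sum_congr rfl fun j _ => ?_
  rw [pd_add j (hdiff hf) ((hdiff hg).const_mul c), pd_const_mul j c (hdiff hg),
    pd_add j (hdiff (contDiff_pd hf j)) ((hdiff (contDiff_pd hg j)).const_mul c),
    pd_const_mul j c (hdiff (contDiff_pd hg j))]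

theorem lapP_coord_mul (hf : ContDiff ℝ ∞ f) {p : Fin n} (hp : (p : ℕ) < n - 1) :
    lapP (fun y => (y p : ℂ) * f y) = fun y => (y p : ℂ) * lapP f y + 2 * pd p f y := by
  have hdiff {u : (Fin n → ℝ) → ℂ} (hu : ContDiff ℝ ∞ u) : Differentiable ℝ u :=
    hu.differentiable (by simp)
  have hsecond (j : Fin n) : pd j (pd j (fun y => (y p : ℂ) * f y))
      = fun y => (y p : ℂ) * pd j (pd j f) y + if j = p then 2 * pd p f y else 0 := by
    rw [pd_coord_mul p j (hdiff hf)]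
    by_cases h : j = p
    · subst h
      simp only [if_true]
      rw [pd_add j (hdiff (contDiff_coord_mul (contDiff_pd hf j) j)) (hdiff hf),
        pd_coord_mul j j (hdiff (contDiff_pd hf j))]
      funext y
      simp only [if_true]
      ring
    · simp only [h, if_false, add_zero]
      rw [pd_coord_mul p j (hdiff (contDiff_pd hf j))]
      simp [h]
  funext x
  simp only [lapP, hsecond, Finset.sum_add_distrib, ← Finset.mul_sum, Finset.sum_ite_eq',
    Finset.mem_filter, Finset.mem_univ, true_and, hp, if_true]

theorem iterate_lapP_coord_mul (hf : ContDiff ℝ ∞ f) {p : Fin n} (hp : (p : ℕ) < n - 1)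
    (k : ℕ) :
    lapP^[k] (fun y => (y p : ℂ) * f y)
      = fun y => (y p : ℂ) * lapP^[k] f y + 2 * k * lapP^[k - 1] (pd p f) y := by
  induction k with
  | zero => simp
  | succ k ih =>
    rw [Function.iterate_succ_apply', ih,
      lapP_add_const_mul (contDiff_coord_mul (contDiff_iterate_lapP hf k) p)
        (contDiff_iterate_lapP (contDiff_pd hf p) _),
      lapP_coord_mul (contDiff_iterate_lapP hf k) hp, pd_iterate_lapP hf,
      ← Function.iterate_succ_apply' lapP k f]
    funext y
    cases k with
    | zero => simp
    | succ k =>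
      simp only [Nat.add_sub_cancel, ← Function.iterate_succ_apply' lapP]
      push_cast
      ring

theorem pdLast_eq (hn : 0 < n) : pdLast (n := n) = pd ⟨n - 1, by omega⟩ := by
  funext f
  exact dif_pos hn

theorem iterate_pd_coord_mul_add_const_mul {p q : Fin n} (hqp : q ≠ p)
    (hg : ContDiff ℝ ∞ g) (hh : ContDiff ℝ ∞ h) (c : ℂ) (m : ℕ) :
    (pd q)^[m] (fun y => (y p : ℂ) * g y + c * h y)
      = fun y => (y p : ℂ) * (pd q)^[m] g y + c * (pd q)^[m] h y := by
  induction m generalizing g h with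
  | zero => rfl
  | succ m ih =>
    have hdiff {u : (Fin n → ℝ) → ℂ} (hu : ContDiff ℝ ∞ u) : Differentiable ℝ u :=
      hu.differentiable (by simp)
    have hstep : pd q (fun y => (y p : ℂ) * g y + c * h y)
        = fun y => (y p : ℂ) * pd q g y + c * pd q h y := by
      rw [pd_add _ (hdiff (contDiff_coord_mul hg p)) ((hdiff hh).const_mul c),
        pd_coord_mul p _ (hdiff hg), pd_const_mul _ c (hdiff hh)]
      simp only [hqp, if_false, add_zero]
    rw [Function.iterate_succ_apply, hstep, ih (contDiff_pd hg q) (contDiff_pd hh q)]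
    rfl

theorem iterate_pdLast_iterate_lapP_coord_mul_apply_zero
    (hf : ContDiff ℝ ∞ f) {p : Fin n} (hp : (p : ℕ) < n - 1) (k m : ℕ) :
    pdLast^[m] (lapP^[k] (fun y => (y p : ℂ) * f y)) 0
      = 2 * k * pdLast^[m] (lapP^[k - 1] (pd p f)) 0 := by
  have hlast : (⟨n - 1, by omega⟩ : Fin n) ≠ p := by
    intro he; rw [← he] at hp; simp at hp
  rw [pdLast_eq (by omega), iterate_lapP_coord_mul hf hp,
    iterate_pd_coord_mul_add_const_mul hlast (contDiff_iterate_lapP hf k)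
      (contDiff_iterate_lapP (contDiff_pd hf p) _)]
  simp

theorem gegenCoeff_add_one (α : ℂ) {l k : ℕ} (hk : 2 * k ≤ l) :
    gegenCoeff (α + 1) l k = -(k + 1) * gegenCoeff α (l + 2) (k + 1) := by
  have hprod : ∏ m ∈ Finset.Ico ((l + 1) / 2) (l - k), (α + 1 + m)
      = ∏ m ∈ Finset.Ico ((l + 2 + 1) / 2) (l + 2 - (k + 1)), (α + m) := by
    rw [Finset.prod_Ico_eq_prod_range, Finset.prod_Ico_eq_prod_range,
      show l + 2 - (k + 1) - (l + 2 + 1) / 2 = l - k - (l + 1) / 2 by omega]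
    refine Finset.prod_congr rfl fun i _ => ?_
    rw [show (l + 2 + 1) / 2 + i = (l + 1) / 2 + i + 1 by omega]
    push_cast
    ring
  have hk0 : (k + 1 : ℂ) ≠ 0 := by exact_mod_cast k.succ_ne_zero
  unfold gegenCoeff
  rw [hprod, show l + 2 - 2 * (k + 1) = l - 2 * k by omega, Nat.factorial_succ]
  push_cast
  field_simp
  ring

theorem Kact_of_neg (n : ℕ) (lam : ℂ) {l : ℤ} (hl : l < 0) (φ : (Fin n → ℝ) → ℂ) :
    Kact n lam l φ = 0 :=
  if_neg (by omega)

theorem Kact_coord_mul (hf : ContDiff ℝ ∞ f) {p : Fin n}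
    (hp : (p : ℕ) < n - 1) (lam : ℂ) (l : ℤ) :
    Kact n lam l (fun y => (y p : ℂ) * f y) = 2 * Kact n (lam + 1) (l - 2) (pd p f) := by
  rcases lt_or_ge l 2 with hl | hl
  · rw [Kact_of_neg n _ (show l - 2 < 0 by omega), mul_zero, Kact]
    split_ifs
    · rw [show l.toNat / 2 + 1 = 1 by omega]
      simp [iterate_pdLast_iterate_lapP_coord_mul_apply_zero hf hp]
    · rfl
  · obtain ⟨L, rfl⟩ : ∃ L : ℕ, l = L + 2 := ⟨(l - 2).toNat, by omega⟩
    simp only [Kact, iterate_pdLast_iterate_lapP_coord_mul_apply_zero hf hp]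
    rw [if_pos (by omega), if_pos (by omega), Finset.sum_range_succ']
    simp only [CharP.cast_eq_zero, mul_zero, zero_mul, add_zero, Finset.mul_sum,
      show ((L : ℤ) + 2).toNat = L + 2 by omega, show ((L : ℤ) + 2 - 2).toNat = L by omega,
      show (L + 2) / 2 = L / 2 + 1 by omega]
    refine Finset.sum_congr rfl fun k hkL => ?_
    have hk : 2 * k ≤ L := by have := Finset.mem_range.mp hkL; omega
    rw [show lam + 1 - ((n : ℂ) - 1) / 2 = lam - ((n : ℂ) - 1) / 2 + 1 by ring,
      gegenCoeff_add_one _ hk, show L + 2 - 2 * (k + 1) = L - 2 * k by omega, Nat.add_sub_cancel]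
    push_cast
    ring

end CoordinateMultiplication

theorem stmt10_general (n : ℕ) (lam : ℂ) (l : ℤ) (p : Fin n) (hp : (p : ℕ) < n - 1)
    (φ : SchwartzMap (Fin n → ℝ) ℂ) :
    Kact n lam l (fun x => (x p : ℂ) * φ x)
      = -2 * (-(Kact n (lam + 1) (l - 2) (pd p ⇑φ))) := by
  rw [Kact_coord_mul (φ.smooth ⊤) hp]
  ring

/-- `x_p·𝒦_{λ,ν} = −2 ∂_p 𝒦_{λ+1,ν−1}` as tempered distributions on ℝ^n, tested against an
arbitrary Schwartz function `φ`; `(x_p·T)(φ) = T(x_p φ)` and `(∂_p T)(φ) = −T(∂_p φ)`. -/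
theorem stmt10 (n : ℕ) (hn : 2 ≤ n) (lam nu : ℂ) (l : ℤ) (hl : 0 ≤ l)
    (hln : nu - lam = (l : ℂ)) (p : Fin n) (hp : (p : ℕ) < n - 1)
    (φ : SchwartzMap (Fin n → ℝ) ℂ) :
    Kact n lam l (fun x => (x p : ℂ) * φ x)
      = -2 * (-(Kact n (lam + 1) (l - 2) (pd p ⇑φ))) :=
  stmt10_general n lam l p hp φ
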